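/- arXiv:2103.11676 — 2 statements merged into one kernel-verified Lean document; each statement's English description precedes it below -/
import Mathlib

section
/- Cut-vertex decomposition formula: if G = G¹ ∪ G² with G¹ ∩ G² = {v}, and L₁ = |G¹|, L₂ = |G²|, L = L₁ + L₂ are the total edge lengths, then μ_c(G) = (L₁/L)² μ_c(G¹) + (L₂/L)² μ_c(G²) + 2(L₁L₂/L²)(μ_c(v,G¹) + μ_c(v,G²)). -/
/-!
Split every integral over `G = G¹ ∪ G²` into its `G¹` and `G²` parts. The `G¹ × G¹` and
`G² × G²` blocks give the two self-terms; on each of the two cross blocks the distance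
`d(p, v) + d(v, q)` integrates to `L₂ ∫ d(·, v) dν₁ + L₁ ∫ d(v, ·) dν₂`, which after
normalisation by `L²` is `L₁L₂/L² (μ_c(v, G¹) + μ_c(v, G²))`.
-/

namespace MeasureTheory

theorem MeasurableEmbedding.inl {α β : Type*} [MeasurableSpace α] [MeasurableSpace β] :
    MeasurableEmbedding (Sum.inl : α → α ⊕ β) :=
  ⟨Sum.inl_injective, measurable_inl, fun _ hs => hs.inl_image⟩

theorem MeasurableEmbedding.inr {α β : Type*} [MeasurableSpace α] [MeasurableSpace β] :
    MeasurableEmbedding (Sum.inr : β → α ⊕ β) :=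
  ⟨Sum.inr_injective, measurable_inr, fun _ hs => hs.inr_image⟩

section SumMeasure

variable {α β E : Type*} [MeasurableSpace α] [MeasurableSpace β]
  [NormedAddCommGroup E] [NormedSpace ℝ E] {μ : Measure α} {ν : Measure β} {F : α ⊕ β → E}

theorem integral_map_inl_add_map_inr (hl : Integrable (fun x => F (.inl x)) μ)
    (hr : Integrable (fun y => F (.inr y)) ν) :
    ∫ z, F z ∂(μ.map Sum.inl + ν.map Sum.inr) = ∫ x, F (.inl x) ∂μ + ∫ y, F (.inr y) ∂ν := by
  rw [integral_add_measure (MeasurableEmbedding.inl.integrable_map_iff.2 hl)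
      (MeasurableEmbedding.inr.integrable_map_iff.2 hr),
    MeasurableEmbedding.inl.integral_map, MeasurableEmbedding.inr.integral_map]

end SumMeasure

theorem integral_const_add_of_measure_univ {α : Type*} [MeasurableSpace α] {μ : Measure α}
    {L : ℝ} (hL : 0 ≤ L) (hμ : μ Set.univ = ENNReal.ofReal L) {g : α → ℝ} (hg : Integrable g μ)
    (c : ℝ) : ∫ x, (c + g x) ∂μ = L * c + ∫ x, g x ∂μ := by
  have : IsFiniteMeasure μ := ⟨by simp [hμ]⟩
  rw [integral_add (integrable_const c) hg, integral_const, smul_eq_mul, measureReal_def, hμ,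
    ENNReal.toReal_ofReal hL]

theorem integral_add_const_of_measure_univ {α : Type*} [MeasurableSpace α] {μ : Measure α}
    {L : ℝ} (hL : 0 ≤ L) (hμ : μ Set.univ = ENNReal.ofReal L) {g : α → ℝ} (hg : Integrable g μ)
    (c : ℝ) : ∫ x, (g x + c) ∂μ = ∫ x, g x ∂μ + L * c := by
  simp_rw [add_comm (g _) c]
  rw [integral_const_add_of_measure_univ hL hμ hg, add_comm]

end MeasureTheory

open MeasureTheory

/-- The points of `G` are modelled as `X₁ ⊕ X₂` with the sum of the length measures; `d₁`, `d₂`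
are the distances within `G¹`, `G²`, and for cross pairs `D(p,q) = d(p,v) + d(v,q) = f p + g q`. -/
theorem cut_vertex_decomposition {X1 X2 : Type*} [MeasurableSpace X1] [MeasurableSpace X2]
    (ν1 : Measure X1) (ν2 : Measure X2) (L1 L2 : ℝ) (hL1 : 0 < L1) (hL2 : 0 < L2)
    (hν1 : ν1 Set.univ = ENNReal.ofReal L1) (hν2 : ν2 Set.univ = ENNReal.ofReal L2)
    (d1 : X1 → X1 → ℝ) (d2 : X2 → X2 → ℝ) (f : X1 → ℝ) (g : X2 → ℝ)
    (D : X1 ⊕ X2 → X1 ⊕ X2 → ℝ)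
    (hD11 : ∀ p q, D (Sum.inl p) (Sum.inl q) = d1 p q)
    (hD22 : ∀ p q, D (Sum.inr p) (Sum.inr q) = d2 p q)
    (hD12 : ∀ p q, D (Sum.inl p) (Sum.inr q) = f p + g q)
    (hD21 : ∀ q p, D (Sum.inr q) (Sum.inl p) = f p + g q)
    (hf : Integrable f ν1) (hg : Integrable g ν2)
    (hd1 : ∀ p, Integrable (d1 p) ν1)
    (hd1' : Integrable (fun p => ∫ q, d1 p q ∂ν1) ν1)
    (hd2 : ∀ p, Integrable (d2 p) ν2)
    (hd2' : Integrable (fun p => ∫ q, d2 p q ∂ν2) ν2) :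
    (1 / (L1 + L2) ^ 2) *
        ∫ p, (∫ q, D p q ∂(ν1.map Sum.inl + ν2.map Sum.inr)) ∂(ν1.map Sum.inl + ν2.map Sum.inr)
      = (L1 / (L1 + L2)) ^ 2 * ((1 / L1 ^ 2) * ∫ p, (∫ q, d1 p q ∂ν1) ∂ν1)
        + (L2 / (L1 + L2)) ^ 2 * ((1 / L2 ^ 2) * ∫ p, (∫ q, d2 p q ∂ν2) ∂ν2)
        + 2 * (L1 * L2 / (L1 + L2) ^ 2) *
            ((1 / L1) * (∫ p, f p ∂ν1) + (1 / L2) * (∫ q, g q ∂ν2)) := by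
  have : IsFiniteMeasure ν1 := ⟨by simp [hν1]⟩
  have : IsFiniteMeasure ν2 := ⟨by simp [hν2]⟩
  set μ := ν1.map Sum.inl + ν2.map Sum.inr
  have inner_inl (x : X1) :
      ∫ q, D (.inl x) q ∂μ = ∫ q, d1 x q ∂ν1 + (L2 * f x + ∫ q, g q ∂ν2) := by
    rw [integral_map_inl_add_map_inr (by simpa only [hD11] using hd1 x)
      (by simp only [hD12]; exact (integrable_const (f x)).add hg)]
    simp only [hD11, hD12, integral_const_add_of_measure_univ hL2.le hν2 hg]
  have inner_inr (y : X2) :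
      ∫ q, D (.inr y) q ∂μ = (L1 * g y + ∫ p, f p ∂ν1) + ∫ q, d2 y q ∂ν2 := by
    rw [integral_map_inl_add_map_inr (by simp only [hD21]; exact hf.add (integrable_const (g y)))
      (by simpa only [hD22] using hd2 y)]
    simp only [hD21, hD22, add_comm _ (g y), integral_const_add_of_measure_univ hL1.le hν1 hf]
  have cross1 : Integrable (fun x => L2 * f x + ∫ q, g q ∂ν2) ν1 :=
    (hf.const_mul L2).add (integrable_const _)
  have cross2 : Integrable (fun y => L1 * g y + ∫ p, f p ∂ν1) ν2 :=
    (hg.const_mul L1).add (integrable_const _)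
  rw [integral_map_inl_add_map_inr (by simp only [inner_inl]; exact hd1'.add cross1)
      (by simp only [inner_inr]; exact cross2.add hd2')]
  simp_rw [inner_inl, inner_inr]
  rw [integral_add hd1' cross1, integral_add cross2 hd2',
    integral_add_const_of_measure_univ hL1.le hν1 (hf.const_mul L2),
    integral_add_const_of_measure_univ hL2.le hν2 (hg.const_mul L1),
    integral_const_mul, integral_const_mul]
  field_simp
  ring
end

section
/- Lower bound for the mean distance between two edges: for distinct edges e = ab, e' = uv of a weighted graph, μ_c(e,e') ≥ d(e,e') + (|e| + |e'|)/4. -/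
lemma integral_min_self_aux : ∫ x in (0:ℝ)..1, min x (1-x) = 1/4 := by
  have h1 : IntervalIntegrable (fun x : ℝ => min x (1-x)) MeasureTheory.volume 0 (1/2) :=
    (Continuous.min continuous_id (continuous_const.sub continuous_id)).intervalIntegrable _ _
  have h2 : IntervalIntegrable (fun x : ℝ => min x (1-x)) MeasureTheory.volume (1/2) 1 :=
    (Continuous.min continuous_id (continuous_const.sub continuous_id)).intervalIntegrable _ _
  rw [← intervalIntegral.integral_add_adjacent_intervals h1 h2]
  have e1 : ∫ x in (0:ℝ)..(1/2), min x (1-x) = ∫ x in (0:ℝ)..(1/2), x := by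
    apply intervalIntegral.integral_congr
    intro x hx
    rw [Set.uIcc_of_le (by norm_num)] at hx
    exact min_eq_left (by cases hx; linarith)
  have e2 : ∫ x in (1/2:ℝ)..1, min x (1-x) = ∫ x in (1/2:ℝ)..1, (1-x) := by
    apply intervalIntegral.integral_congr
    intro x hx
    rw [Set.uIcc_of_le (by norm_num)] at hx
    exact min_eq_right (by cases hx; linarith)
  rw [e1, e2]
  rw [integral_id, intervalIntegral.integral_sub intervalIntegrable_const
    intervalIntegral.intervalIntegrable_id, integral_id, intervalIntegral.integral_const]
  norm_num

/-- Lower bound for the continuous mean distance between two distinct edges: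
for edges `e = ab` and `e' = uv` of lengths `ℓ`, `ℓ'` (parametrized by arc length),
since every shortest path between a point of `e` and a point of `e'` exits `e` through
an endpoint and enters `e'` through an endpoint, the continuous mean distance
`μ_c(e,e') = ∫₀¹∫₀¹ dist (p x) (q y) dy dx` satisfies
`μ_c(e,e') ≥ d(e,e') + (ℓ + ℓ')/4`, where
`d(e,e') = min{d(a,u), d(a,v), d(b,u), d(b,v)}`. -/
theorem mean_distance_two_edges_lower_bound {X : Type*} [PseudoMetricSpace X]
    (a b u v : X) (ℓ ℓ' : ℝ) (hℓ : 0 < ℓ) (hℓ' : 0 < ℓ')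
    (p q : ℝ → X)
    (hpa : ∀ x ∈ Set.Icc (0:ℝ) 1, dist (p x) a = x * ℓ)
    (hpb : ∀ x ∈ Set.Icc (0:ℝ) 1, dist (p x) b = (1 - x) * ℓ)
    (hqu : ∀ y ∈ Set.Icc (0:ℝ) 1, dist (q y) u = y * ℓ')
    (hqv : ∀ y ∈ Set.Icc (0:ℝ) 1, dist (q y) v = (1 - y) * ℓ')
    (hexit : ∀ x ∈ Set.Icc (0:ℝ) 1, ∀ y ∈ Set.Icc (0:ℝ) 1,
      ∃ w w' : X, (w = a ∨ w = b) ∧ (w' = u ∨ w' = v) ∧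
        dist (p x) (q y) = dist (p x) w + dist w w' + dist w' (q y)) :
    min (min (dist a u) (dist a v)) (min (dist b u) (dist b v)) + (ℓ + ℓ') / 4
      ≤ ∫ x in (0:ℝ)..1, ∫ y in (0:ℝ)..1, dist (p x) (q y) := by
  set D := min (min (dist a u) (dist a v)) (min (dist b u) (dist b v)) with hD
  set F : ℝ → ℝ → ℝ := fun x y =>
    min (min (x*ℓ + dist a u + y*ℓ') (x*ℓ + dist a v + (1-y)*ℓ'))
        (min ((1-x)*ℓ + dist b u + y*ℓ') ((1-x)*ℓ + dist b v + (1-y)*ℓ')) with hFdef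
  -- joint continuity of F
  have hFcont : Continuous (Function.uncurry F) := by
    apply Continuous.min <;> apply Continuous.min <;> fun_prop
  -- pointwise equality dist = F on the square
  have key : ∀ x ∈ Set.Icc (0:ℝ) 1, ∀ y ∈ Set.Icc (0:ℝ) 1, dist (p x) (q y) = F x y := by
    intro x hx y hy
    have dau : dist (p x) (q y) ≤ x*ℓ + dist a u + y*ℓ' := by
      have := dist_triangle4 (p x) a u (q y)
      rw [hpa x hx, dist_comm u (q y), hqu y hy] at this; exact this
    have dav : dist (p x) (q y) ≤ x*ℓ + dist a v + (1-y)*ℓ' := by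
      have := dist_triangle4 (p x) a v (q y)
      rw [hpa x hx, dist_comm v (q y), hqv y hy] at this; exact this
    have dbu : dist (p x) (q y) ≤ (1-x)*ℓ + dist b u + y*ℓ' := by
      have := dist_triangle4 (p x) b u (q y)
      rw [hpb x hx, dist_comm u (q y), hqu y hy] at this; exact this
    have dbv : dist (p x) (q y) ≤ (1-x)*ℓ + dist b v + (1-y)*ℓ' := by
      have := dist_triangle4 (p x) b v (q y)
      rw [hpb x hx, dist_comm v (q y), hqv y hy] at this; exact this
    have hle : dist (p x) (q y) ≤ F x y := by
      simp only [hFdef, le_min_iff]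
      exact ⟨⟨dau, dav⟩, ⟨dbu, dbv⟩⟩
    refine le_antisymm hle ?_
    obtain ⟨w, w', hw, hw', heq⟩ := hexit x hx y hy
    rcases hw with rfl | rfl <;> rcases hw' with rfl | rfl
    · rw [heq, hpa x hx, dist_comm w' (q y), hqu y hy]
      exact min_le_of_left_le (min_le_left _ _)
    · rw [heq, hpa x hx, dist_comm w' (q y), hqv y hy]
      exact min_le_of_left_le (min_le_right _ _)
    · rw [heq, hpb x hx, dist_comm w' (q y), hqu y hy]
      exact min_le_of_right_le (min_le_left _ _)
    · rw [heq, hpb x hx, dist_comm w' (q y), hqv y hy]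
      exact min_le_of_right_le (min_le_right _ _)
  -- replace the integrand
  have hrw : (∫ x in (0:ℝ)..1, ∫ y in (0:ℝ)..1, dist (p x) (q y))
      = ∫ x in (0:ℝ)..1, ∫ y in (0:ℝ)..1, F x y := by
    apply intervalIntegral.integral_congr
    intro x hx
    rw [Set.uIcc_of_le (by norm_num : (0:ℝ) ≤ 1)] at hx
    apply intervalIntegral.integral_congr
    intro y hy
    rw [Set.uIcc_of_le (by norm_num : (0:ℝ) ≤ 1)] at hy
    exact key x hx y hy
  rw [hrw]
  -- lower bound function
  set G : ℝ → ℝ → ℝ := fun x y => D + min x (1-x) * ℓ + min y (1-y) * ℓ' with hGdef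
  have hGcont : Continuous (Function.uncurry G) := by
    apply Continuous.add
    apply Continuous.add continuous_const
    · exact ((continuous_fst).min (by fun_prop)).mul continuous_const
    · exact ((continuous_snd).min (by fun_prop)).mul continuous_const
  have hGF : ∀ x ∈ Set.Icc (0:ℝ) 1, ∀ y ∈ Set.Icc (0:ℝ) 1, G x y ≤ F x y := by
    intro x hx y hy
    obtain ⟨hx0, hx1⟩ := hx
    obtain ⟨hy0, hy1⟩ := hy
    have hxm : min x (1-x) * ℓ ≤ x * ℓ := by
      apply mul_le_mul_of_nonneg_right (min_le_left _ _) hℓ.le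
    have hxm' : min x (1-x) * ℓ ≤ (1-x) * ℓ := by
      apply mul_le_mul_of_nonneg_right (min_le_right _ _) hℓ.le
    have hym : min y (1-y) * ℓ' ≤ y * ℓ' := by
      apply mul_le_mul_of_nonneg_right (min_le_left _ _) hℓ'.le
    have hym' : min y (1-y) * ℓ' ≤ (1-y) * ℓ' := by
      apply mul_le_mul_of_nonneg_right (min_le_right _ _) hℓ'.le
    have h1 : D ≤ dist a u := min_le_of_left_le (min_le_left _ _)
    have h2 : D ≤ dist a v := min_le_of_left_le (min_le_right _ _)
    have h3 : D ≤ dist b u := min_le_of_right_le (min_le_left _ _)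
    have h4 : D ≤ dist b v := min_le_of_right_le (min_le_right _ _)
    simp only [hFdef, hGdef, le_min_iff]
    refine ⟨⟨by linarith, by linarith⟩, ⟨by linarith, by linarith⟩⟩
  -- inner integral bound
  have hinner : ∀ x ∈ Set.Icc (0:ℝ) 1,
      (∫ y in (0:ℝ)..1, G x y) ≤ ∫ y in (0:ℝ)..1, F x y := by
    intro x hx
    apply intervalIntegral.integral_mono_on (by norm_num)
    · exact (hGcont.uncurry_left x).intervalIntegrable _ _
    · exact (hFcont.uncurry_left x).intervalIntegrable _ _
    · intro y hy; exact hGF x hx y hy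
  -- outer bound
  have houter : (∫ x in (0:ℝ)..1, ∫ y in (0:ℝ)..1, G x y)
      ≤ ∫ x in (0:ℝ)..1, ∫ y in (0:ℝ)..1, F x y := by
    apply intervalIntegral.integral_mono_on (by norm_num)
    · exact (intervalIntegral.continuous_parametric_intervalIntegral_of_continuous'
        hGcont 0 1).intervalIntegrable _ _
    · exact (intervalIntegral.continuous_parametric_intervalIntegral_of_continuous'
        hFcont 0 1).intervalIntegrable _ _
    · exact hinner
  refine le_trans ?_ houter
  -- compute the double integral of G
  have hmin : IntervalIntegrable (fun t : ℝ => min t (1-t)) MeasureTheory.volume 0 1 :=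
    (Continuous.min continuous_id (continuous_const.sub continuous_id)).intervalIntegrable _ _
  have hinnerG : ∀ x : ℝ, (∫ y in (0:ℝ)..1, G x y) = D + min x (1-x) * ℓ + ℓ'/4 := by
    intro x
    have : (∫ y in (0:ℝ)..1, G x y)
        = (∫ _ in (0:ℝ)..1, (D + min x (1-x) * ℓ)) + ∫ y in (0:ℝ)..1, min y (1-y) * ℓ' := by
      rw [← intervalIntegral.integral_add intervalIntegrable_const (hmin.mul_const _)]
    rw [this, intervalIntegral.integral_const, intervalIntegral.integral_mul_const,
      integral_min_self_aux, smul_eq_mul]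
    ring
  have : (∫ x in (0:ℝ)..1, ∫ y in (0:ℝ)..1, G x y)
      = ∫ x in (0:ℝ)..1, (D + min x (1-x) * ℓ + ℓ'/4) := by
    apply intervalIntegral.integral_congr
    intro x _
    exact hinnerG x
  rw [this]
  have : (∫ x in (0:ℝ)..1, (D + min x (1-x) * ℓ + ℓ'/4))
      = (∫ _ in (0:ℝ)..1, (D + ℓ'/4)) + ∫ x in (0:ℝ)..1, min x (1-x) * ℓ := by
    rw [← intervalIntegral.integral_add intervalIntegrable_const (hmin.mul_const _)]
    apply intervalIntegral.integral_congr
    intro x _; ring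
  rw [this, intervalIntegral.integral_const, intervalIntegral.integral_mul_const,
    integral_min_self_aux, smul_eq_mul]
  linarith
end
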